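/- arXiv:2112.07293 — 9 statements merged into one kernel-verified Lean document; each statement's English description precedes it below -/
import Mathlib

section
/- Let M be a d-dimensional subspace of the space of n×n matrices over the finite field F_q with d > 0, such that every element of M has determinant zero, but the determinantal polynomial P_M (computed with respect to some basis) is not the zero polynomial. Then q < n. -/
/-!
The determinantal polynomial `P` is homogeneous of degree `n`, and it vanishes on all of `F^d`
because every element of `M` is singular. Over a field with `q` elements, a nonzero homogeneous
polynomial of degree `n ≤ q` cannot vanish on all of `F^d`: if one of its monomials has every
exponent below `q`, the Combinatorial Nullstellensatz on the grid `F^d` gives a non-zero value;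
otherwise that monomial is `X_i ^ q` with `n = q`, and the polynomial takes the value of its
coefficient at the basis vector `e_i`.
-/

open MvPolynomial

/-- The determinantal polynomial of a tuple of `n × n` matrices:
`det (x_1 M_1 + ⋯ + x_d M_d)` as a polynomial in `d` variables. -/
noncomputable def detPoly {F : Type*} [Field F] {n d : ℕ}
    (b : Fin d → Matrix (Fin n) (Fin n) F) : MvPolynomial (Fin d) F :=
  Matrix.det (Matrix.of fun i j => ∑ k, X k * C (b k i j))

theorem Finsupp.eq_single_of_degree_le {σ : Type*} {t : σ →₀ ℕ} {i : σ} (h : t.degree ≤ t i) :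
    t = Finsupp.single i t.degree := by
  have hsplit := Finsupp.single_add_erase i t
  have herase : (t.erase i).degree = 0 := by
    have := congrArg Finsupp.degree hsplit
    rw [map_add, Finsupp.degree_single] at this
    omega
  rw [Finsupp.degree_eq_zero_iff] at herase
  rw [herase, add_zero] at hsplit
  rw [← hsplit, Finsupp.degree_single]

namespace MvPolynomial

variable {σ R : Type*} [CommRing R]

theorem isHomogeneous_det {ι : Type*} [Fintype ι] [DecidableEq ι]
    {A : Matrix ι ι (MvPolynomial σ R)} (hA : ∀ i j, (A i j).IsHomogeneous 1) :
    A.det.IsHomogeneous (Fintype.card ι) := by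
  rw [Matrix.det_apply]
  refine IsHomogeneous.sum _ _ _ fun τ _ => ?_
  rw [Units.smul_def]
  refine (homogeneousSubmodule σ R _).toAddSubgroup.zsmul_mem ?_ _
  convert IsHomogeneous.prod Finset.univ _ (fun _ => 1) fun i _ => hA (τ i) i
  simp

theorem IsHomogeneous.eval_piSingle [Fintype σ] [DecidableEq σ] {p : MvPolynomial σ R} {n : ℕ}
    (hp : p.IsHomogeneous n) (i : σ) :
    eval (Pi.single i 1) p = coeff (Finsupp.single i n) p := by
  rw [eval_eq', Finset.sum_eq_single (Finsupp.single i n)]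
  · simp [Pi.single_apply, Finsupp.single_apply]
  · intro s hs hne
    obtain ⟨j, hji, hsj⟩ : ∃ j ≠ i, s j ≠ 0 := by
      by_contra! h
      have hdeg : s.degree = s i := by
        rw [Finsupp.degree_eq_sum, Finset.sum_eq_single i (fun j _ hj => h j hj) (by simp)]
      apply hne
      rw [Finsupp.eq_single_of_degree_le hdeg.le]
      exact congrArg _ (hp.degree_eq_sum_deg_support hs).symm
    exact mul_eq_zero_of_right _ (Finset.prod_eq_zero (Finset.mem_univ j) (by simp [hji, hsj]))
  · intro h
    rw [notMem_support_iff.mp h, zero_mul]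

theorem IsHomogeneous.exists_eval_ne_zero [Fintype R] [IsDomain R] [Finite σ]
    {p : MvPolynomial σ R} {n : ℕ}
    (hp : p.IsHomogeneous n) (hp0 : p ≠ 0) (hn : n ≤ Fintype.card R) :
    ∃ x, eval x p ≠ 0 := by
  classical
  have := Fintype.ofFinite σ
  obtain ⟨t, ht⟩ := ne_zero_iff.mp hp0
  have htdeg : t.degree = n := (hp.degree_eq_sum_deg_support (mem_support_iff.mpr ht)).symm
  by_cases hsmall : ∀ i, t i < Fintype.card R
  · obtain ⟨x, -, hx⟩ := combinatorial_nullstellensatz_exists_eval_nonzero p t ht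
      (by rw [hp.totalDegree hp0, htdeg]) (fun _ => Finset.univ) (by simpa using hsmall)
    exact ⟨x, hx⟩
  · simp only [not_forall, not_lt] at hsmall
    obtain ⟨i, hi⟩ := hsmall
    refine ⟨Pi.single i 1, ?_⟩
    rwa [hp.eval_piSingle, ← htdeg, ← Finsupp.eq_single_of_degree_le (by omega)]

end MvPolynomial

theorem isHomogeneous_detPoly {F : Type*} [Field F] {n d : ℕ}
    (b : Fin d → Matrix (Fin n) (Fin n) F) : (detPoly b).IsHomogeneous n := by
  have h := isHomogeneous_det (A := Matrix.of fun i j => ∑ k, X k * C (b k i j))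
    fun i j => by
      rw [Matrix.of_apply]
      exact IsHomogeneous.sum _ _ _ fun k _ => by
        simpa using (isHomogeneous_X F k).mul (isHomogeneous_C (Fin d) (b k i j))
  rw [Fintype.card_fin] at h
  exact h

theorem eval_detPoly {F : Type*} [Field F] {n d : ℕ}
    (b : Fin d → Matrix (Fin n) (Fin n) F) (v : Fin d → F) :
    eval v (detPoly b) = (∑ k, v k • b k).det := by
  rw [detPoly, RingHom.map_det, RingHom.mapMatrix_apply]
  congr 1
  ext i j
  simp [Matrix.sum_apply]

theorem stmt0_general {F : Type*} [Field F] [Fintype F] {n d : ℕ}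
    (M : Submodule F (Matrix (Fin n) (Fin n) F))
    (b : Module.Basis (Fin d) F M)
    (hdet : ∀ A ∈ M, Matrix.det A = 0)
    (hP : detPoly (fun k => (b k : Matrix (Fin n) (Fin n) F)) ≠ 0) :
    Fintype.card F < n := by
  by_contra! hn
  obtain ⟨v, hv⟩ := (isHomogeneous_detPoly _).exists_eval_ne_zero hP hn
  apply hv
  rw [eval_detPoly]
  exact hdet _ (M.sum_mem fun k _ => M.smul_mem _ (b k).2)

theorem stmt0 {F : Type*} [Field F] [Fintype F] {n d : ℕ} (hd : 0 < d)
    (M : Submodule F (Matrix (Fin n) (Fin n) F))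
    (b : Module.Basis (Fin d) F M)
    (hdet : ∀ A ∈ M, Matrix.det A = 0)
    (hP : detPoly (fun k => (b k : Matrix (Fin n) (Fin n) F)) ≠ 0) :
    Fintype.card F < n :=
  stmt0_general M b hdet hP
end

section
/- Let f be a non-constant homogeneous polynomial in F_q[x_1,...,x_d]. If 2d ≥ 1 + deg f and f has no non-trivial zero in F_q^d, then f is irreducible over F_q. -/
/-!
Write `f = g * h` with `g`, `h` non-units. Over a domain both the total degree and the lowest
degree of a product are additive, and they agree for the homogeneous `f`; so they agree for `g`
and `h` too, i.e. `g` and `h` are homogeneous, of positive degrees adding up to `deg f`. The factor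
of smaller degree has degree `≤ deg f / 2 < d` and vanishes at `0`, so by Chevalley's theorem it
has a non-trivial zero, which is also a zero of `f`.
-/

open MvPolynomial

namespace MvPolynomial

variable {σ R : Type*}

section CommSemiring

variable [CommSemiring R] {p : MvPolynomial σ R}

theorem order_coe_le_totalDegree (hp : p ≠ 0) :
    (p : MvPowerSeries σ R).order ≤ p.totalDegree := by
  obtain ⟨d, hd⟩ := ne_zero_iff.mp hp
  calc (p : MvPowerSeries σ R).order ≤ d.degree := MvPowerSeries.order_le (by rwa [coeff_coe])
    _ ≤ p.totalDegree := by exact_mod_cast le_totalDegree (mem_support_iff.mpr hd)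

theorem IsHomogeneous.order_coe {n : ℕ} (hp : p.IsHomogeneous n) (h0 : p ≠ 0) :
    (p : MvPowerSeries σ R).order = n :=
  le_antisymm (hp.totalDegree h0 ▸ order_coe_le_totalDegree h0)
    (MvPowerSeries.nat_le_order fun _ hd => by rw [coeff_coe]; exact hp.coeff_eq_zero hd.ne)

theorem isHomogeneous_totalDegree_of_totalDegree_le_order
    (h : p.totalDegree ≤ (p : MvPowerSeries σ R).order) :
    p.IsHomogeneous p.totalDegree := by
  intro d hd
  have hd_le : d.degree ≤ p.totalDegree := le_totalDegree (mem_support_iff.mpr hd)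
  have hd_ge : p.totalDegree ≤ d.degree := by
    exact_mod_cast h.trans (MvPowerSeries.order_le (by rwa [coeff_coe]))
  simpa [Finsupp.degree_eq_weight_one, Pi.one_def] using le_antisymm hd_le hd_ge

theorem IsHomogeneous.eval_zero {n : ℕ} (hp : p.IsHomogeneous n) (hn : n ≠ 0) :
    eval 0 p = 0 := by
  rw [MvPolynomial.eval_zero, constantCoeff_eq]
  exact hp.coeff_eq_zero (by simpa using hn.symm)

end CommSemiring

theorem IsHomogeneous.isHomogeneous_totalDegree_of_mul [CommRing R] [IsDomain R]
    {g h : MvPolynomial σ R} {n : ℕ} (hgh : (g * h).IsHomogeneous n) (hg : g ≠ 0)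
    (hh : h ≠ 0) :
    g.IsHomogeneous g.totalDegree := by
  have htop : g.totalDegree + h.totalDegree = n := by
    rw [← totalDegree_mul_of_isDomain hg hh, hgh.totalDegree (mul_ne_zero hg hh)]
  have hbot : (g : MvPowerSeries σ R).order + (h : MvPowerSeries σ R).order = n := by
    rw [← MvPowerSeries.order_mul, ← coe_mul, hgh.order_coe (mul_ne_zero hg hh)]
  have hg' := order_coe_le_totalDegree hg
  have hh' := order_coe_le_totalDegree hh
  apply isHomogeneous_totalDegree_of_totalDegree_le_order
  lift (g : MvPowerSeries σ R).order to ℕ using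
    ne_top_of_le_ne_top (ENat.natCast_ne_top _) hg' with a
  lift (h : MvPowerSeries σ R).order to ℕ using
    ne_top_of_le_ne_top (ENat.natCast_ne_top _) hh' with b
  norm_cast at *
  omega

section Field

variable {K : Type*} [Field K]

theorem isUnit_of_totalDegree_eq_zero {p : MvPolynomial σ K} (hp : p ≠ 0)
    (h : p.totalDegree = 0) : IsUnit p := by
  refine isUnit_iff_totalDegree_of_isReduced.mpr ⟨isUnit_iff_ne_zero.mpr fun h0 => hp ?_, h⟩
  rw [totalDegree_eq_zero_iff_eq_C.mp h, h0, map_zero]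

variable [Fintype K] [Fintype σ]

/-- By Chevalley–Warning the characteristic divides the number of zeros, so it is not `1`. -/
theorem exists_ne_zero_eval_eq_zero {f : MvPolynomial σ K}
    (hf : f.totalDegree < Fintype.card σ) (h0 : eval 0 f = 0) :
    ∃ x ≠ 0, eval x f = 0 := by
  classical
  obtain ⟨c, hc⟩ := CharP.exists K
  by_contra! hx
  have hcard : Fintype.card { x : σ → K // eval x f = 0 } = 1 :=
    Fintype.card_eq_one_iff.mpr
      ⟨⟨0, h0⟩, fun ⟨x, hx0⟩ => Subtype.ext (not_not.mp fun hne => hx x hne hx0)⟩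
  have hdvd := char_dvd_card_solutions c hf
  rw [hcard, Nat.dvd_one] at hdvd
  exact (CharP.char_is_prime K c).ne_one hdvd

theorem isUnit_of_dvd_of_forall_eval_ne_zero {f g : MvPolynomial σ K} (hf0 : f ≠ 0)
    (hz : ∀ v : σ → K, v ≠ 0 → eval v f ≠ 0) (hgf : g ∣ f)
    (hg : g.IsHomogeneous g.totalDegree) (hgσ : g.totalDegree < Fintype.card σ) : IsUnit g := by
  by_contra hu
  have hpos : g.totalDegree ≠ 0 :=
    fun h => hu (isUnit_of_totalDegree_eq_zero (ne_zero_of_dvd_ne_zero hf0 hgf) h)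
  obtain ⟨v, hv, hgv⟩ := exists_ne_zero_eval_eq_zero hgσ (hg.eval_zero hpos)
  exact hz v hv (zero_dvd_iff.mp (hgv ▸ (eval v).map_dvd hgf))

end Field

end MvPolynomial

theorem stmt2 {F : Type*} [Field F] [Fintype F] {d n : ℕ} (hn : 0 < n)
    (f : MvPolynomial (Fin d) F) (hf : f.IsHomogeneous n) (hf0 : f ≠ 0)
    (hdeg : 2 * d ≥ 1 + n)
    (hz : ∀ v : Fin d → F, v ≠ 0 → eval v f ≠ 0) :
    Irreducible f := by
  refine ⟨fun hu => ?_, fun a b hab => ?_⟩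
  · have := (isUnit_iff_totalDegree_of_isReduced.mp hu).2
    rw [hf.totalDegree hf0] at this
    omega
  have ha0 : a ≠ 0 := by rintro rfl; simp_all
  have hb0 : b ≠ 0 := by rintro rfl; simp_all
  have hsum : a.totalDegree + b.totalDegree = n := by
    rw [← totalDegree_mul_of_isDomain ha0 hb0, ← hab, hf.totalDegree hf0]
  have hab' : (a * b).IsHomogeneous n := hab ▸ hf
  have hba' : (b * a).IsHomogeneous n := mul_comm a b ▸ hab'
  have ha := hab'.isHomogeneous_totalDegree_of_mul ha0 hb0
  have hb := hba'.isHomogeneous_totalDegree_of_mul hb0 ha0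
  rcases le_total a.totalDegree b.totalDegree with hle | hle
  · exact .inl <| isUnit_of_dvd_of_forall_eval_ne_zero hf0 hz (hab ▸ dvd_mul_right a b) ha
      (by rw [Fintype.card_fin]; omega)
  · exact .inr <| isUnit_of_dvd_of_forall_eval_ne_zero hf0 hz (hab ▸ dvd_mul_left b a) hb
      (by rw [Fintype.card_fin]; omega)
end

section
/- Let r be a prime and M a subspace of M_r(F_q) whose determinantal polynomial is irreducible but not absolutely irreducible. If A, B ∈ M with det A ≠ 0 and det B = 0, then A^{-1}B is nilpotent. -/
/-! Let `K` be the algebraic closure of `F = 𝔽_q` and `s : x ↦ x ^ q` its Frobenius. Let `ℓ` be an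
irreducible factor over `K` of the determinantal polynomial `P`. The product of the `s`-orbit of
`ℓ` is `s`-invariant, hence has coefficients in `F`, and divides `P`; as `P` is irreducible over
`F`, it is a scalar multiple of this product. So `r = deg P` is the orbit length times `deg ℓ`;
since `r` is prime and `P` is not absolutely irreducible, `ℓ` is a linear form and
`P = c ∏_{i < r} s^i(ℓ)`.

If `det B = 0`, one conjugate `s^i(ℓ)`, hence every one, vanishes at the `F`-rational coordinate
vector of `B`. Then `det (A + t B) = det A` for all `t ∈ K`, so `det (1 + t A⁻¹B) = 1`, the
characteristic polynomial of `A⁻¹B` is `X ^ r`, and `A⁻¹B` is nilpotent. -/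

open MvPolynomial

open Function

theorem Finset.prod_dvd_of_pairwise_not_associated {α ι : Type*} [CommMonoid α]
    [DecompositionMonoid α] {s : Finset ι} {f : ι → α} {z : α}
    (hf : ∀ i ∈ s, Irreducible (f i))
    (hs : (s : Set ι).Pairwise fun i j => ¬Associated (f i) (f j))
    (hz : ∀ i ∈ s, f i ∣ z) : ∏ i ∈ s, f i ∣ z :=
  Finset.prod_dvd_of_isRelPrime (fun i hi j hj hij => (hf i hi).isRelPrime_iff_not_dvd.2
    fun hdvd => hs hi hj hij ((hf i hi).associated_of_dvd (hf j hj) hdvd)) hz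

theorem Function.IsPeriodicPt.map_prod_range_iterate {M G : Type*} [CommMonoid M] [FunLike G M M]
    [MonoidHomClass G M M] {f : G} {n : ℕ} {x : M} (hx : IsPeriodicPt f n x) :
    f (∏ i ∈ Finset.range n, f^[i] x) = ∏ i ∈ Finset.range n, f^[i] x := by
  cases n with
  | zero => simp
  | succ n =>
    simp_rw [map_prod, ← iterate_succ_apply' f]
    rw [Finset.prod_range_succ, hx.eq, Finset.prod_range_succ' (fun i => f^[i] x),
      iterate_zero_apply]

namespace FiniteField

variable {F K : Type*} [Field F] [Fintype F] [Field K] [Algebra F K] [Algebra.IsAlgebraic F K]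

theorem mem_periodicPts_frobeniusAlgEquivOfAlgebraic (x : K) :
    x ∈ periodicPts (frobeniusAlgEquivOfAlgebraic F K) := by
  let E := IntermediateField.adjoin F {x}
  have : FiniteDimensional F E :=
    IntermediateField.adjoin.finiteDimensional (Algebra.IsIntegral.isIntegral x)
  have : Finite E := Module.finite_of_finite F
  have : Fintype E := Fintype.ofFinite E
  have hx : (⟨x, IntermediateField.mem_adjoin_simple_self F x⟩ : E) ^ Fintype.card E = ⟨x, _⟩ :=
    pow_card _
  refine ⟨Module.finrank F E, Module.finrank_pos, ?_⟩
  rw [IsPeriodicPt, IsFixedPt, coe_frobeniusAlgEquivOfAlgebraic_iterate,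
    ← Module.card_eq_pow_finrank]
  exact congrArg Subtype.val hx

theorem mem_range_algebraMap_of_isFixedPt_frobeniusAlgEquivOfAlgebraic {x : K}
    (hx : IsFixedPt (frobeniusAlgEquivOfAlgebraic F K) x) : x ∈ Set.range (algebraMap F K) := by
  classical
  have hroot : x ∈ ((Polynomial.X ^ Fintype.card F - Polynomial.X : Polynomial F).map
      (algebraMap F K)).roots := by
    rw [Polynomial.mem_roots (Polynomial.map_ne_zero (X_pow_card_sub_X_ne_zero F
      Fintype.one_lt_card))]
    simpa [sub_eq_zero] using hx.eq
  rw [← Polynomial.roots_map_of_injective_of_card_eq_natDegree (algebraMap F K).injective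
    (by rw [roots_X_pow_card_sub_X, X_pow_card_sub_X_natDegree_eq F Fintype.one_lt_card]; rfl),
    roots_X_pow_card_sub_X] at hroot
  simpa using hroot

end FiniteField

namespace MvPolynomial

section General

variable {σ R : Type*}

theorem totalDegree_map_of_injective [CommSemiring R] {S : Type*} [CommSemiring S] {f : R →+* S}
    (hf : Injective f) (p : MvPolynomial σ R) :
    (map f p).totalDegree = p.totalDegree := by
  simp only [totalDegree, support_map_of_injective p hf]

theorem totalDegree_prod_of_isDomain [CommRing R] [IsDomain R] {ι : Type*} (s : Finset ι)
    {f : ι → MvPolynomial σ R} (hf : ∀ i ∈ s, f i ≠ 0) :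
    (∏ i ∈ s, f i).totalDegree = ∑ i ∈ s, (f i).totalDegree := by
  classical
  induction s using Finset.induction_on with
  | empty => simp
  | insert a s ha ih =>
    rw [Finset.prod_insert ha, Finset.sum_insert ha, totalDegree_mul_of_isDomain
      (hf a (by simp)) (Finset.prod_ne_zero_iff.2 fun i hi => hf i (by simp [hi])),
      ih fun i hi => hf i (by simp [hi])]

theorem isHomogeneous_one_of_totalDegree_le_one [CommSemiring R] {p : MvPolynomial σ R}
    (hp : p.totalDegree ≤ 1) (hp0 : constantCoeff p = 0) : p.IsHomogeneous 1 := by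
  intro μ hμ
  have hle : μ.degree ≤ 1 := (le_totalDegree (mem_support_iff.2 hμ)).trans hp
  have hne : μ.degree ≠ 0 := by
    rw [Ne, Finsupp.degree_eq_zero_iff]
    rintro rfl
    exact hμ (by rwa [← constantCoeff_eq])
  change Finsupp.weight (fun _ ↦ 1) μ = 1
  rw [← Finsupp.degree_eq_weight_one]
  omega

theorem IsHomogeneous.eval_add_smul [CommSemiring R] {p : MvPolynomial σ R}
    (hp : p.IsHomogeneous 1) (x y : σ → R) (t : R) :
    eval (x + t • y) p = eval x p + t * eval y p := by
  replace hp : p ∈ Submodule.span R (Set.range X) := by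
    rw [← homogeneousSubmodule_one_eq_span_X]; exact hp
  induction hp using Submodule.span_induction with
  | mem q hq => obtain ⟨i, rfl⟩ := hq; simp
  | zero => simp
  | add q q' _ _ hq hq' => simp only [map_add, hq, hq']; ring
  | smul c q _ hq => simp only [smul_eval, hq]; ring

theorem eq_of_associated_of_coeff_eq_one [CommRing R] [IsDomain R] {p q : MvPolynomial σ R}
    {μ : σ →₀ ℕ} (hp : coeff μ p = 1) (hq : coeff μ q = 1) (hpq : Associated p q) : p = q := by
  obtain ⟨u, rfl⟩ := hpq
  obtain ⟨c, -, hc⟩ := (isUnit_iff_eq_C_of_isReduced (P := (u : MvPolynomial σ R))).1 u.isUnit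
  rw [hc, mul_comm, coeff_C_mul, hp, mul_one] at hq
  rw [hc, hq, C_1, mul_one]

theorem exists_associated_coeff_eq_one [Field R] {p : MvPolynomial σ R} (hp : p ≠ 0) :
    ∃ μ q, Associated p q ∧ coeff μ q = 1 := by
  obtain ⟨μ, hμ⟩ := support_nonempty.2 hp
  have hc : coeff μ p ≠ 0 := mem_support_iff.1 hμ
  refine ⟨μ, C (coeff μ p)⁻¹ * p, ?_, by rw [coeff_C_mul, inv_mul_cancel₀ hc]⟩
  exact (associated_unit_mul_left p _ ((isUnit_iff_ne_zero.2 (inv_ne_zero hc)).map C)).symm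

end General

section Descent

variable {F K σ : Type*} [Field F] [Field K] [Algebra F K] (s : K ≃ₐ[F] K)

theorem coeff_iterate_mapAlgEquiv (μ : σ →₀ ℕ) (n : ℕ) (p : MvPolynomial σ K) :
    coeff μ ((mapAlgEquiv σ s)^[n] p) = s^[n] (coeff μ p) :=
  Semiconj.iterate_right (f := coeff μ) (fun p => by simp [coeff_map]) n p

theorem eval_algebraMap_comp_iterate_mapAlgEquiv (y : σ → F) (n : ℕ) (p : MvPolynomial σ K) :
    eval (algebraMap F K ∘ y) ((mapAlgEquiv σ s)^[n] p) = s^[n] (eval (algebraMap F K ∘ y) p) :=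
  Semiconj.iterate_right (f := eval (algebraMap F K ∘ y)) (fun p => by
    rw [mapAlgEquiv_apply, eval_map, eval, coe_eval₂Hom, ← RingHom.coe_coe s, eval₂_comp_left]
    congr 1; ext; simp) n p

theorem mapAlgEquiv_map_algebraMap (P : MvPolynomial σ F) :
    mapAlgEquiv σ s (map (algebraMap F K) P) = map (algebraMap F K) P := by
  rw [mapAlgEquiv_apply, map_map,
    show (s : K →+* K).comp (algebraMap F K) = algebraMap F K from RingHom.ext s.commutes]

theorem mem_periodicPts_mapAlgEquiv (hper : ∀ x, x ∈ periodicPts s) (p : MvPolynomial σ K) :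
    p ∈ periodicPts (mapAlgEquiv σ s) := by
  refine ⟨∏ μ ∈ p.support, minimalPeriod s (coeff μ p),
    Finset.prod_pos fun μ _ => minimalPeriod_pos_of_mem_periodicPts (hper _), ?_⟩
  ext μ
  rw [coeff_iterate_mapAlgEquiv]
  by_cases hμ : μ ∈ p.support
  · exact isPeriodicPt_iff_minimalPeriod_dvd.2 (Finset.dvd_prod_of_mem _ hμ)
  · rw [notMem_support_iff.1 hμ]
    exact iterate_map_zero s _

theorem mem_range_map_of_isFixedPt_mapAlgEquiv
    (hfix : ∀ x, IsFixedPt s x → x ∈ Set.range (algebraMap F K))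
    {p : MvPolynomial σ K} (hp : IsFixedPt (mapAlgEquiv σ s) p) :
    p ∈ Set.range (map (algebraMap F K)) := by
  classical
  rw [mem_range_map_iff_coeffs_subset]
  intro x hx
  obtain ⟨μ, -, rfl⟩ := mem_coeffs_iff.1 hx
  exact hfix _ (by simpa [coeff_map] using congrArg (coeff μ) hp.eq : s (coeff μ p) = coeff μ p)

theorem not_isUnit_map_of_irreducible {P : MvPolynomial σ F} (hP : Irreducible P) :
    ¬IsUnit (map (algebraMap F K) P) := by
  rw [isUnit_iff_totalDegree_of_isReduced, totalDegree_map_of_injective (algebraMap F K).injective,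
    coeff_map, isUnit_iff_ne_zero, map_ne_zero, ← isUnit_iff_ne_zero,
    ← isUnit_iff_totalDegree_of_isReduced]
  exact hP.not_isUnit

theorem exists_map_eq_C_mul_of_dvd (hfix : ∀ x, IsFixedPt s x → x ∈ Set.range (algebraMap F K))
    {P : MvPolynomial σ F} (hP : Irreducible P) {G : MvPolynomial σ K} (hG : ¬IsUnit G)
    (hGP : G ∣ map (algebraMap F K) P) (hsG : IsFixedPt (mapAlgEquiv σ s) G) :
    ∃ c, map (algebraMap F K) P = C c * G := by
  obtain ⟨H, hGH⟩ := hGP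
  have hG0 : G ≠ 0 := by
    rintro rfl
    rw [zero_mul, ← map_zero (map (algebraMap F K))] at hGH
    exact hP.ne_zero (map_injective _ (algebraMap F K).injective hGH)
  have hsH : IsFixedPt (mapAlgEquiv σ s) H := mul_left_cancel₀ hG0 <| calc
    G * mapAlgEquiv σ s H = mapAlgEquiv σ s (G * H) := by rw [map_mul, hsG.eq]
    _ = G * H := by rw [← hGH, mapAlgEquiv_map_algebraMap]
  obtain ⟨GF, rfl⟩ := mem_range_map_of_isFixedPt_mapAlgEquiv s hfix hsG
  obtain ⟨HF, rfl⟩ := mem_range_map_of_isFixedPt_mapAlgEquiv s hfix hsH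
  have hP_eq : P = GF * HF := map_injective _ (algebraMap F K).injective (by rw [hGH, map_mul])
  obtain ⟨c, -, rfl⟩ := isUnit_iff_eq_C_of_isReduced.1 <|
    (hP.isUnit_or_isUnit hP_eq).resolve_left fun hu => hG (hu.map _)
  exact ⟨algebraMap F K c, by rw [hGH, map_C, mul_comm]⟩

/-- Normalising `ℓ` to have a coefficient equal to `1` makes associated conjugates equal, so the
conjugates before the minimal period are pairwise non-associated irreducible factors. -/
theorem exists_map_eq_C_mul_prod_orbit (hper : ∀ x, x ∈ periodicPts s)
    (hfix : ∀ x, IsFixedPt s x → x ∈ Set.range (algebraMap F K))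
    {P : MvPolynomial σ F} (hP : Irreducible P) :
    ∃ (c : K) (ℓ : MvPolynomial σ K), Irreducible ℓ ∧
      map (algebraMap F K) P =
        C c * ∏ i ∈ Finset.range (minimalPeriod (mapAlgEquiv σ s) ℓ), (mapAlgEquiv σ s)^[i] ℓ := by
  classical
  set Φ := mapAlgEquiv σ s
  obtain ⟨h, hh, hhP⟩ := WfDvdMonoid.exists_irreducible_factor
    (not_isUnit_map_of_irreducible (K := K) hP)
    ((map_ne_zero_iff _ (map_injective _ (algebraMap F K).injective)).2 hP.ne_zero)
  obtain ⟨μ, ℓ, hhℓ, hℓμ⟩ := exists_associated_coeff_eq_one hh.ne_zero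
  have hℓ : Irreducible ℓ := hhℓ.irreducible hh
  have hirr (i : ℕ) : Irreducible (Φ^[i] ℓ) :=
    Iterate.rec _ hℓ (fun p hp => (MulEquiv.irreducible_iff Φ.toMulEquiv).2 hp) i
  have hdvd (i : ℕ) : Φ^[i] ℓ ∣ map (algebraMap F K) P :=
    Iterate.rec _ (hhℓ.symm.dvd.trans hhP)
      (fun p hp => mapAlgEquiv_map_algebraMap s P ▸ map_dvd Φ hp) i
  have hcoeff (i : ℕ) : coeff μ (Φ^[i] ℓ) = 1 := by
    rw [coeff_iterate_mapAlgEquiv, hℓμ, iterate_map_one]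
  have hpos : 0 < minimalPeriod Φ ℓ :=
    minimalPeriod_pos_of_mem_periodicPts (mem_periodicPts_mapAlgEquiv s hper ℓ)
  refine ⟨_, ℓ, hℓ, (exists_map_eq_C_mul_of_dvd s hfix hP ?_ ?_ ?_).choose_spec⟩
  · refine fun hu => hℓ.not_isUnit (isUnit_of_dvd_unit ?_ hu)
    simpa using Finset.dvd_prod_of_mem (Φ^[·] ℓ) (Finset.mem_range.2 hpos)
  · refine Finset.prod_dvd_of_pairwise_not_associated (fun i _ => hirr i)
      (fun i hi j hj hij hass => hij ?_) (fun i _ => hdvd i)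
    exact iterate_injOn_Iio_minimalPeriod (by simpa using hi) (by simpa using hj)
      (eq_of_associated_of_coeff_eq_one (hcoeff i) (hcoeff j) hass)
  · exact (isPeriodicPt_minimalPeriod Φ ℓ).map_prod_range_iterate

theorem totalDegree_prod_range_iterate_mapAlgEquiv {ℓ : MvPolynomial σ K} (hℓ : ℓ ≠ 0) (n : ℕ) :
    (∏ i ∈ Finset.range n, (mapAlgEquiv σ s)^[i] ℓ).totalDegree = n * ℓ.totalDegree := by
  have hdeg (i : ℕ) : ((mapAlgEquiv σ s)^[i] ℓ).totalDegree = ℓ.totalDegree :=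
    congrFun (iterate_invariant (g := totalDegree) (_root_.funext fun p => by
      simpa using totalDegree_map_of_injective (s : K →+* K).injective p) i) ℓ
  rw [totalDegree_prod_of_isDomain _ fun i _ => ?_]
  · simp [hdeg]
  · rw [← iterate_map_zero (mapAlgEquiv σ s) i]
    exact ((mapAlgEquiv σ s).injective.iterate i).ne hℓ

theorem exists_map_eq_C_mul_prod_range_iterate (hper : ∀ x, x ∈ periodicPts s)
    (hfix : ∀ x, IsFixedPt s x → x ∈ Set.range (algebraMap F K)) {r : ℕ} (hr : r.Prime)
    {P : MvPolynomial σ F} (hP : P.IsHomogeneous r) (hirr : Irreducible P)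
    (habs : ¬Irreducible (map (algebraMap F K) P)) :
    ∃ (c : K) (ℓ : MvPolynomial σ K), ℓ.IsHomogeneous 1 ∧
      map (algebraMap F K) P = C c * ∏ i ∈ Finset.range r, (mapAlgEquiv σ s)^[i] ℓ := by
  obtain ⟨c, ℓ, hℓ, hfac⟩ := exists_map_eq_C_mul_prod_orbit s hper hfix hirr
  set e := minimalPeriod (mapAlgEquiv σ s) ℓ
  have hmap0 : map (algebraMap F K) P ≠ 0 :=
    (map_ne_zero_iff _ (map_injective _ (algebraMap F K).injective)).2 hirr.ne_zero
  have hc : c ≠ 0 := by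
    rintro rfl
    rw [C_0, zero_mul] at hfac
    exact hmap0 hfac
  have hdeg : e * ℓ.totalDegree = r := by
    rw [← (hP.map _).totalDegree hmap0, hfac, totalDegree_mul_of_isDomain (C_ne_zero.2 hc)
      (right_ne_zero_of_mul (hfac ▸ hmap0)), totalDegree_C, zero_add,
      totalDegree_prod_range_iterate_mapAlgEquiv s hℓ.ne_zero]
  obtain ⟨he, hℓ1⟩ : e = r ∧ ℓ.totalDegree = 1 := by
    rcases Nat.prime_mul_iff.1 (hdeg ▸ hr) with ⟨-, h1⟩ | ⟨-, he⟩
    · exact ⟨by rw [← hdeg, h1, mul_one], h1⟩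
    · refine absurd ?_ habs
      rw [hfac, he, Finset.prod_range_one, iterate_zero_apply]
      exact (associated_unit_mul_left ℓ _ ((isUnit_iff_ne_zero.2 hc).map C)).symm.irreducible hℓ
  have hℓ0 : constantCoeff ℓ = 0 := by
    have hmap_const : constantCoeff (map (algebraMap F K) P) = 0 := by
      rw [constantCoeff_map, constantCoeff_eq, hP.coeff_eq_zero (by simpa using hr.ne_zero.symm),
        map_zero]
    rw [hfac, map_mul, constantCoeff_C, map_prod] at hmap_const
    obtain ⟨i, -, hi⟩ := Finset.prod_eq_zero_iff.1 ((mul_eq_zero.1 hmap_const).resolve_left hc)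
    rw [constantCoeff_eq, coeff_iterate_mapAlgEquiv, ← iterate_map_zero s i] at hi
    rw [constantCoeff_eq]
    exact s.injective.iterate i hi
  exact ⟨c, ℓ, isHomogeneous_one_of_totalDegree_le_one hℓ1.le hℓ0, he ▸ hfac⟩

theorem aeval_add_smul_eq_of_aeval_eq_zero {P : MvPolynomial σ F} {c : K} {ℓ : MvPolynomial σ K}
    {n : ℕ} (hfac : map (algebraMap F K) P = C c * ∏ i ∈ Finset.range n, (mapAlgEquiv σ s)^[i] ℓ)
    (hℓ : ℓ.IsHomogeneous 1) {y : σ → F} (hy : aeval (algebraMap F K ∘ y) P = 0)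
    (x : σ → K) (t : K) : aeval (x + t • (algebraMap F K ∘ y)) P = aeval x P := by
  have haeval (z : σ → K) :
      aeval z P = c * ∏ i ∈ Finset.range n, eval z ((mapAlgEquiv σ s)^[i] ℓ) := by
    rw [aeval_eq_eval₂Hom, coe_eval₂Hom, ← eval_map, hfac, map_mul, eval_C, map_prod]
  rcases eq_or_ne c 0 with rfl | hc
  · simp [haeval]
  have hℓy : eval (algebraMap F K ∘ y) ℓ = 0 := by
    rw [haeval] at hy
    obtain ⟨i, -, hi⟩ := Finset.prod_eq_zero_iff.1 ((mul_eq_zero.1 hy).resolve_left hc)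
    rw [eval_algebraMap_comp_iterate_mapAlgEquiv, ← iterate_map_zero s i] at hi
    exact s.injective.iterate i hi
  rw [haeval, haeval]
  refine congrArg (c * ·) (Finset.prod_congr rfl fun i _ => ?_)
  have hom : ((mapAlgEquiv σ s)^[i] ℓ).IsHomogeneous 1 :=
    Iterate.rec _ hℓ (fun p hp => by simpa using hp.map (s : K →+* K)) i
  rw [hom.eval_add_smul, eval_algebraMap_comp_iterate_mapAlgEquiv, hℓy, iterate_map_zero,
    mul_zero, add_zero]

end Descent

end MvPolynomial

namespace Matrix

variable {K n : Type*} [Fintype n] [DecidableEq n]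

theorem isNilpotent_of_forall_det_one_add_smul_eq_one [Field K] [Infinite K] {N : Matrix n n K}
    (h : ∀ t : K, (1 + t • N).det = 1) : IsNilpotent N := by
  have hchar : N.charpoly = Polynomial.X ^ Fintype.card n := by
    refine Polynomial.eq_of_infinite_eval_eq _ _
      ((Set.finite_singleton 0).infinite_compl.mono fun x hx => ?_)
    rw [Set.mem_ofPred_eq, eval_charpoly, Polynomial.eval_pow, Polynomial.eval_X]
    calc (scalar n x - N).det = (x • (1 + (-x⁻¹) • N)).det := by
          simp [smul_add, smul_smul, mul_inv_cancel₀ (show x ≠ 0 from hx), sub_eq_add_neg,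
            smul_one_eq_diagonal]
      _ = x ^ Fintype.card n := by rw [det_smul, h, mul_one]
  exact ⟨Fintype.card n, by simpa [hchar] using aeval_self_charpoly N⟩

theorem isNilpotent_of_forall_det_add_smul_eq [Field K] [Infinite K] {A B N : Matrix n n K}
    (hA : A.det ≠ 0) (hAN : A * N = B) (h : ∀ t : K, (A + t • B).det = A.det) :
    IsNilpotent N :=
  isNilpotent_of_forall_det_one_add_smul_eq_one fun t => mul_left_cancel₀ hA <| by
    rw [← det_mul, mul_add, mul_one, Matrix.mul_smul, hAN, h, mul_one]

theorem isHomogeneous_det {σ R : Type*} [CommRing R] {M : Matrix n n (MvPolynomial σ R)}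
    (hM : ∀ i j, (M i j).IsHomogeneous 1) : M.det.IsHomogeneous (Fintype.card n) := by
  rw [det_apply']
  refine IsHomogeneous.sum _ _ _ fun τ _ => ?_
  have := (isHomogeneous_C σ ((Equiv.Perm.sign τ : ℤ) : R)).mul
    (IsHomogeneous.prod Finset.univ (fun i => M (τ i) i) (fun _ => 1) fun i _ => hM (τ i) i)
  rwa [map_intCast, Finset.sum_const, Finset.card_univ, smul_eq_mul, mul_one, zero_add] at this

end Matrix

section DetPoly

variable {F K : Type*} [Field F] [CommRing K] [Algebra F K] {n d : ℕ}

theorem detPoly_isHomogeneous (b : Fin d → Matrix (Fin n) (Fin n) F) :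
    (detPoly b).IsHomogeneous n := by
  have hentry (i j : Fin n) : (∑ k, X k * C (b k i j) : MvPolynomial (Fin d) F).IsHomogeneous 1 :=
    IsHomogeneous.sum _ _ 1 fun k _ => by
      simpa using (isHomogeneous_X F k).mul (isHomogeneous_C _ (b k i j))
  rw [detPoly]
  simpa using Matrix.isHomogeneous_det (M := .of fun i j => ∑ k, X k * C (b k i j)) hentry

theorem aeval_detPoly (b : Fin d → Matrix (Fin n) (Fin n) F) (w : Fin d → K) :
    aeval w (detPoly b) = (∑ k, w k • (b k).map (algebraMap F K)).det := by
  rw [detPoly, AlgHom.map_det]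
  congr
  ext i j
  simp [Matrix.sum_apply]

variable {M : Submodule F (Matrix (Fin n) (Fin n) F)} (b : Module.Basis (Fin d) F M)

theorem map_coe_eq_sum_repr_smul (w : M) :
    (w : Matrix (Fin n) (Fin n) F).map (algebraMap F K) =
      ∑ k, algebraMap F K (b.repr w k) • (b k : Matrix (Fin n) (Fin n) F).map (algebraMap F K) := by
  conv_lhs => rw [← b.sum_repr w]
  ext i j
  simp [Matrix.sum_apply, -Module.Basis.sum_repr]
  simp [Algebra.smul_def]

theorem det_map_coe_eq_aeval_detPoly (w : M) :
    ((w : Matrix (Fin n) (Fin n) F).map (algebraMap F K)).det =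
      aeval (algebraMap F K ∘ b.repr w) (detPoly fun k => (b k : Matrix (Fin n) (Fin n) F)) := by
  rw [aeval_detPoly, map_coe_eq_sum_repr_smul b]
  rfl

theorem det_map_add_smul_map_eq_aeval_detPoly (u v : M) (t : K) :
    ((u : Matrix (Fin n) (Fin n) F).map (algebraMap F K) +
        t • (v : Matrix (Fin n) (Fin n) F).map (algebraMap F K)).det =
      aeval (algebraMap F K ∘ b.repr u + t • (algebraMap F K ∘ b.repr v))
        (detPoly fun k => (b k : Matrix (Fin n) (Fin n) F)) := by
  rw [aeval_detPoly, map_coe_eq_sum_repr_smul b, map_coe_eq_sum_repr_smul b]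
  simp only [Pi.add_apply, Pi.smul_apply, comp_apply, smul_eq_mul, add_smul, mul_smul,
    Finset.sum_add_distrib, Finset.smul_sum]

end DetPoly

theorem stmt6 {F : Type*} [Field F] [Fintype F] {r d : ℕ} (hr : r.Prime)
    (M : Submodule F (Matrix (Fin r) (Fin r) F))
    (b : Module.Basis (Fin d) F M)
    (hirr : Irreducible (detPoly (fun k => (b k : Matrix (Fin r) (Fin r) F))))
    (habs : ¬ Irreducible (MvPolynomial.map (algebraMap F (AlgebraicClosure F))
      (detPoly (fun k => (b k : Matrix (Fin r) (Fin r) F)))))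
    (A B : Matrix (Fin r) (Fin r) F) (hA : A ∈ M) (hB : B ∈ M)
    (hdA : Matrix.det A ≠ 0) (hdB : Matrix.det B = 0) :
    IsNilpotent (A⁻¹ * B) := by
  set K := AlgebraicClosure F
  set φ := algebraMap F K
  have hdet_map (N : Matrix (Fin r) (Fin r) F) : (N.map φ).det = φ N.det :=
    (RingHom.map_det φ N).symm
  obtain ⟨c, ℓ, hℓ, hfac⟩ := exists_map_eq_C_mul_prod_range_iterate _
    FiniteField.mem_periodicPts_frobeniusAlgEquivOfAlgebraic
    (fun _ => FiniteField.mem_range_algebraMap_of_isFixedPt_frobeniusAlgEquivOfAlgebraic) hr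
    (detPoly_isHomogeneous _) hirr habs
  have hB0 :
      aeval (φ ∘ b.repr ⟨B, hB⟩) (detPoly fun k => (b k : Matrix (Fin r) (Fin r) F)) = 0 := by
    rw [← det_map_coe_eq_aeval_detPoly, Submodule.coe_mk, hdet_map, hdB, map_zero]
  have hconst (t : K) : (A.map φ + t • B.map φ).det = (A.map φ).det := by
    rw [det_map_add_smul_map_eq_aeval_detPoly b ⟨A, hA⟩ ⟨B, hB⟩,
      aeval_add_smul_eq_of_aeval_eq_zero _ hfac hℓ hB0, ← det_map_coe_eq_aeval_detPoly b ⟨A, hA⟩]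
  rw [← IsNilpotent.map_iff (f := φ.mapMatrix) (Matrix.map_injective φ.injective)]
  refine Matrix.isNilpotent_of_forall_det_add_smul_eq
    (by rw [hdet_map]; exact (map_ne_zero φ).2 hdA) ?_ hconst
  rw [RingHom.mapMatrix_apply, ← Matrix.map_mul, ← mul_assoc,
    Matrix.mul_nonsing_inv _ (isUnit_iff_ne_zero.2 hdA), one_mul]
end

section
/- Let K be a field and M a subspace of M_n(K) such that the set M_0 of elements of M with determinant zero is a linear subspace of M of codimension n in M. Then M_0 = {0}, i.e., every non-zero element of M has non-zero determinant. -/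
/-!
For every nonzero column vector `v`, the matrices of `M` killing `v` are singular, so they form a
subspace of `M₀`; being the kernel of `A ↦ A *ᵥ v`, it has codimension at most `n` in `M`, which
is the codimension of `M₀`. Hence it is all of `M₀`: every element of `M₀` kills every column
vector, and so vanishes.
-/

open Module LinearMap Matrix

section

variable {K V W : Type*} [Field K] [AddCommGroup V] [Module K V] [AddCommGroup W] [Module K W]
  [FiniteDimensional K V] [FiniteDimensional K W]

theorem Submodule.finrank_le_finrank_inf_ker_add (M : Submodule K V) (f : V →ₗ[K] W) :
    finrank K M ≤ finrank K ↥(M ⊓ ker f) + finrank K W := by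
  have hrange : finrank K (range (f.domRestrict M)) ≤ finrank K W := Submodule.finrank_le _
  have hker : finrank K (ker (f.domRestrict M)) = finrank K ↥(M ⊓ ker f) := by
    rw [ker_domRestrict, (Submodule.equivSubtypeMap M _).finrank_eq, Submodule.map_comap_subtype]
  have := finrank_range_add_finrank_ker (f.domRestrict M)
  omega

/-- The dimension count forces `N = M ⊓ ker f`. -/
theorem Submodule.le_ker_of_inf_ker_le {M N : Submodule K V} (f : V →ₗ[K] W)
    (hker : M ⊓ ker f ≤ N) (hcodim : finrank K N + finrank K W ≤ finrank K M) :
    N ≤ ker f := by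
  have := M.finrank_le_finrank_inf_ker_add f
  rw [← Submodule.eq_of_le_of_finrank_le hker (by omega)]
  exact inf_le_right

end

theorem stmt7 {K : Type*} [Field K] {n : ℕ}
    (M M₀ : Submodule K (Matrix (Fin n) (Fin n) K))
    (hmem : ∀ A, A ∈ M₀ ↔ A ∈ M ∧ Matrix.det A = 0)
    (hcodim : Module.finrank K M = Module.finrank K M₀ + n) :
    M₀ = ⊥ := by
  have hkill : ∀ v : Fin n → K, v ≠ 0 → ∀ A ∈ M₀, A *ᵥ v = 0 := by
    intro v hv
    refine Submodule.le_ker_of_inf_ker_le ((mulVecBilin K K).flip v) ?_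
      (by rw [finrank_fin_fun, hcodim])
    rintro A ⟨hA, hAv⟩
    exact (hmem A).2 ⟨hA, exists_mulVec_eq_zero_iff.mp ⟨v, hv, hAv⟩⟩
  refine (Submodule.eq_bot_iff _).2 fun A hA => ext_of_mulVec_single fun j => ?_
  rw [hkill _ (Pi.single_ne_zero_iff.2 one_ne_zero) A hA, zero_mulVec]
end

section
/- For every positive integer d and n = 2d+1, there exists a d-dimensional subspace M of M_n(F_q) such that every non-zero element of M has non-zero determinant, yet for all A, B in M with A invertible, the characteristic polynomial of A^{-1}B is reducible over F_q. -/
/-!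
Left multiplication embeds the degree-`t` extension of a finite field `F` into `t × t` matrices
over `F`, and every nonzero element of the image is invertible. Pairing such an embedding of
`F^d` into `d × d` matrices with an injective linear map of `F^d` into the analogous space of
`(d + 1) × (d + 1)` matrices gives a `d`-dimensional space of block-diagonal matrices
`diag(A₁, A₂)` whose nonzero elements are invertible. For `A, B` in it, `A⁻¹ * B` is again block
diagonal, so its characteristic polynomial is a product of two factors of degrees `d` and `d + 1`.
-/

open Matrix Module

namespace Matrix

variable {R m n : Type*} [CommRing R]

section BlockDiag

variable {V : Type*} [AddCommGroup V] [Module R V]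

def blockDiagLinearMap (f₁ : V →ₗ[R] Matrix m m R) (f₂ : V →ₗ[R] Matrix n n R) :
    V →ₗ[R] Matrix (m ⊕ n) (m ⊕ n) R where
  toFun x := fromBlocks (f₁ x) 0 0 (f₂ x)
  map_add' x y := by simp [fromBlocks_add]
  map_smul' c x := by simp [fromBlocks_smul]

@[simp]
theorem blockDiagLinearMap_apply (f₁ : V →ₗ[R] Matrix m m R) (f₂ : V →ₗ[R] Matrix n n R) (x : V) :
    blockDiagLinearMap f₁ f₂ x = fromBlocks (f₁ x) 0 0 (f₂ x) :=
  rfl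

end BlockDiag

variable [Fintype m] [Fintype n] [DecidableEq m] [DecidableEq n]

theorem not_isUnit_charpoly [Nontrivial R] [Nonempty m] (A : Matrix m m R) :
    ¬ IsUnit A.charpoly := fun hA ↦ by
  simpa using congrArg Polynomial.natDegree ((charpoly_monic A).isUnit_iff.mp hA)

theorem fromBlocks_zero_inv_mul_fromBlocks_zero (A₁ B₁ : Matrix m m R) (A₂ B₂ : Matrix n n R)
    (h : IsUnit A₁ ↔ IsUnit A₂) :
    (fromBlocks A₁ 0 0 A₂)⁻¹ * fromBlocks B₁ 0 0 B₂ = fromBlocks (A₁⁻¹ * B₁) 0 0 (A₂⁻¹ * B₂) := by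
  rw [inv_fromBlocks_zero₂₁_of_isUnit_iff _ _ _ h, fromBlocks_multiply]
  simp

theorem not_irreducible_charpoly_fromBlocks_zero₂₁ [Nontrivial R] [Nonempty m] [Nonempty n]
    (A : Matrix m m R) (B : Matrix m n R) (D : Matrix n n R) :
    ¬ Irreducible (fromBlocks A B 0 D).charpoly := by
  rw [charpoly_fromBlocks_zero₂₁]
  exact fun hirr ↦ (hirr.isUnit_or_isUnit rfl).elim (not_isUnit_charpoly A) (not_isUnit_charpoly D)

end Matrix

theorem FiniteField.exists_injective_linearMap_matrix_isUnit {F V n : Type*} [Field F] [Finite F]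
    [AddCommGroup V] [Module F V] [FiniteDimensional F V] [Fintype n] [DecidableEq n]
    [Nonempty n] (h : finrank F V ≤ Fintype.card n) :
    ∃ f : V →ₗ[F] Matrix n n F, Function.Injective f ∧ ∀ x ≠ 0, IsUnit (f x) := by
  obtain ⟨p, _⟩ := CharP.exists F
  have : Fact p.Prime := ⟨CharP.char_is_prime F p⟩
  have : NeZero (Fintype.card n) := ⟨Fintype.card_ne_zero⟩
  let K := Extension F p (Fintype.card n)
  let b : Basis n F K :=
    (finBasisOfFinrankEq F K (finrank_extension F p _)).reindex (Fintype.equivFin n).symm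
  obtain ⟨g, hg⟩ : ∃ g : V →ₗ[F] K, Function.Injective g :=
    Free.exists_linearMap_injective_of_linearIndependent_of_lift_rank_le b.linearIndependent
      (by simpa [← finrank_eq_rank] using h)
  refine ⟨(Algebra.leftMulMatrix b).toLinearMap ∘ₗ g, (Algebra.leftMulMatrix_injective b).comp hg,
    fun x hx ↦ ?_⟩
  exact (isUnit_iff_ne_zero.mpr ((map_ne_zero_iff g hg).mpr hx)).map (Algebra.leftMulMatrix b)

theorem exists_submodule_nonsingular_not_irreducible_charpoly {F m n : Type*} [Field F] [Finite F]
    [Fintype m] [Fintype n] [DecidableEq m] [DecidableEq n] [Nonempty m]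
    (h : Fintype.card m ≤ Fintype.card n) :
    ∃ M : Submodule F (Matrix (m ⊕ n) (m ⊕ n) F), finrank F M = Fintype.card m ∧
      (∀ A ∈ M, A ≠ 0 → A.det ≠ 0) ∧
      ∀ A ∈ M, ∀ B ∈ M, A.det ≠ 0 → ¬ Irreducible (A⁻¹ * B).charpoly := by
  have : Nonempty n := Fintype.card_pos_iff.mp (Fintype.card_pos.trans_le h)
  obtain ⟨f₁, hf₁, hu₁⟩ :=
    FiniteField.exists_injective_linearMap_matrix_isUnit (F := F) (V := m → F) (n := m) (by simp)
  obtain ⟨f₂, -, hu₂⟩ :=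
    FiniteField.exists_injective_linearMap_matrix_isUnit (F := F) (V := m → F) (n := n) (by simpa)
  set L := blockDiagLinearMap f₁ f₂
  have hL : Function.Injective L := fun x y hxy ↦
    hf₁ (by simpa [L] using congrArg toBlocks₁₁ hxy)
  have hdet : ∀ x ≠ 0, (L x).det ≠ 0 := fun x hx ↦
    ((isUnit_iff_isUnit_det _).mp (isUnit_fromBlocks_zero₂₁.mpr ⟨hu₁ x hx, hu₂ x hx⟩)).ne_zero
  refine ⟨LinearMap.range L, ?_, ?_, ?_⟩
  · rw [LinearMap.finrank_range_of_inj hL, finrank_fintype_fun_eq_card]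
  · rintro _ ⟨x, rfl⟩ hx
    exact hdet x (by rintro rfl; simp at hx)
  · rintro _ ⟨x, rfl⟩ _ ⟨y, rfl⟩ hx
    have hx₀ : x ≠ 0 := by rintro rfl; simp at hx
    rw [blockDiagLinearMap_apply, blockDiagLinearMap_apply,
      fromBlocks_zero_inv_mul_fromBlocks_zero _ _ _ _ (iff_of_true (hu₁ x hx₀) (hu₂ x hx₀))]
    exact not_irreducible_charpoly_fromBlocks_zero₂₁ _ _ _

theorem stmt8 {F : Type*} [Field F] [Fintype F] (d : ℕ) (hd : 0 < d) :
    ∃ M : Submodule F (Matrix (Fin (2 * d + 1)) (Fin (2 * d + 1)) F),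
      Module.finrank F M = d ∧
      (∀ A ∈ M, A ≠ 0 → Matrix.det A ≠ 0) ∧
      (∀ A ∈ M, ∀ B ∈ M, Matrix.det A ≠ 0 →
        ¬ Irreducible (Matrix.charpoly (A⁻¹ * B))) := by
  have : Nonempty (Fin d) := ⟨⟨0, hd⟩⟩
  obtain ⟨M, hrank, hdet, hred⟩ :=
    exists_submodule_nonsingular_not_irreducible_charpoly (F := F) (m := Fin d) (n := Fin (d + 1))
      (by simp)
  let e : Fin d ⊕ Fin (d + 1) ≃ Fin (2 * d + 1) := finSumFinEquiv.trans (finCongr (by omega))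
  refine ⟨M.map (reindexLinearEquiv F F e e).toLinearMap, ?_, ?_, ?_⟩
  · rw [LinearEquiv.finrank_map_eq, hrank, Fintype.card_fin]
  · rintro _ ⟨A, hA, rfl⟩ hA₀
    simpa using hdet A hA (by rintro rfl; simp at hA₀)
  · rintro _ ⟨A, hA, rfl⟩ _ ⟨B, hB, rfl⟩ hAdet
    simp only [LinearEquiv.coe_coe, coe_reindexLinearEquiv, det_reindex_self] at hAdet ⊢
    rw [inv_reindex, ← coe_reindexLinearEquiv F,
      reindexLinearEquiv_mul, coe_reindexLinearEquiv, charpoly_reindex]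
    exact hred A hA B hB hAdet
end

section
/- Let K be a field, L a degree-3 Galois extension of K with Galois group generated by σ. Consider the set N of K-linear endomorphisms T_{a,b} of L given by T_{a,b}(z) = a(σ²(z) − σ(z)) + b·z, where a ranges over K and b ranges over elements of L of trace zero. Then N is a 3-dimensional K-subspace of End_K(L), and the non-invertible elements of N are exactly the K-multiples of σ² − σ; these form a one-dimensional subspace whose non-zero elements have rank 2. -/
/-!
Write `D = σ² - σ`. Its kernel is the fixed field `K` of `⟨σ⟩`, so `D` has rank 2 and kills `1`.
The condition `b + σ b + σ² b = 0` says `Tr b = 0`, a plane in `L`, and `(a, b) ↦ a D + b·` is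
injective (evaluate at `1`), so `N` is 3-dimensional. If `b ≠ 0`, applying `σ` and `σ²` to
`a D z + b z = 0` gives a linear system in `z, σ z, σ² z` of determinant
`b σ(b) σ²(b) + a² (b + σ b + σ² b) = b σ(b) σ²(b) ≠ 0`, so `a D + b·` is injective.
-/

open Module LinearMap

lemma Fintype.sum_eq_sum_range_orderOf_pow {G M : Type*} [Group G] [Fintype G]
    [AddCommMonoid M] {g : G} (hg : ∀ x : G, x ∈ Subgroup.zpowers g) (f : G → M) :
    ∑ x, f x = ∑ i ∈ Finset.range (orderOf g), f (g ^ i) := by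
  classical
  have huniv : Finset.univ = (Finset.range (orderOf g)).image (g ^ ·) := by
    ext x
    simpa [eq_comm] using mem_zpowers_iff_mem_range_orderOf.mp (hg x)
  rw [huniv, Finset.sum_image]
  intro i hi j hj
  exact pow_injOn_Iio_orderOf (by simpa using hi) (by simpa using hj)

lemma eq_zero_of_cyclic_system {F : Type*} [Field F] {α b b₁ b₂ u v w : F}
    (hb : b ≠ 0) (hb₁ : b₁ ≠ 0) (hb₂ : b₂ ≠ 0) (hsum : b + b₁ + b₂ = 0)
    (h₁ : α * (w - v) + b * u = 0) (h₂ : α * (u - w) + b₁ * v = 0)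
    (h₃ : α * (v - u) + b₂ * w = 0) : u = 0 := by
  -- the coefficients form the first column of the adjugate of the system's matrix
  have hdet : b * b₁ * b₂ * u = 0 := by
    linear_combination (b₁ * b₂ + α ^ 2) * h₁ + (α * b₂ + α ^ 2) * h₂ + (α ^ 2 - α * b₁) * h₃
      - α ^ 2 * u * hsum
  simpa [hb, hb₁, hb₂] using hdet

section CyclicGalois

variable {K L : Type*} [Field K] [Field L] [Algebra K L] {σ : L ≃ₐ[K] L}

lemma orderOf_eq_finrank_of_forall_mem_zpowers [FiniteDimensional K L] [IsGalois K L]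
    (hgen : ∀ τ : L ≃ₐ[K] L, τ ∈ Subgroup.zpowers σ) : orderOf σ = finrank K L := by
  rw [← IsGalois.card_aut_eq_finrank, ← Nat.card_zpowers, (Subgroup.eq_top_iff' _).mpr hgen,
    Subgroup.card_top]

lemma algebraMap_trace_eq_sum_range_orderOf [FiniteDimensional K L] [IsGalois K L]
    (hgen : ∀ τ : L ≃ₐ[K] L, τ ∈ Subgroup.zpowers σ) (x : L) :
    algebraMap K L (Algebra.trace K L x) = ∑ i ∈ Finset.range (orderOf σ), (σ ^ i) x := by
  rw [trace_eq_sum_automorphisms, Fintype.sum_eq_sum_range_orderOf_pow hgen]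

lemma mem_range_algebraMap_of_apply_eq_self [FiniteDimensional K L] [IsGalois K L]
    (hgen : ∀ τ : L ≃ₐ[K] L, τ ∈ Subgroup.zpowers σ) {x : L} (hx : σ x = x) :
    x ∈ (algebraMap K L).range := by
  have hstab : Subgroup.zpowers σ ≤ MulAction.stabilizer (L ≃ₐ[K] L) x :=
    Subgroup.zpowers_le.mpr hx
  exact (IsGalois.mem_range_algebraMap_iff_fixed x).mpr fun τ => hstab (hgen τ)

lemma finrank_ker_trace_add_one [FiniteDimensional K L] [Algebra.IsSeparable K L] :
    finrank K (ker (Algebra.trace K L)) + 1 = finrank K L := by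
  rw [← (Algebra.trace K L).finrank_range_add_finrank_ker,
    range_eq_top.mpr (Algebra.trace_surjective K L), finrank_top, finrank_self, add_comm]

variable (σ) in
def sqSub : L →ₗ[K] L := σ.toLinearMap ∘ₗ σ.toLinearMap - σ.toLinearMap

lemma sqSub_def : sqSub σ = σ.toLinearMap ∘ₗ σ.toLinearMap - σ.toLinearMap := rfl

@[simp]
lemma sqSub_apply (z : L) : sqSub σ z = σ (σ z) - σ z := rfl

lemma ker_sqSub [FiniteDimensional K L] [IsGalois K L]
    (hgen : ∀ τ : L ≃ₐ[K] L, τ ∈ Subgroup.zpowers σ) :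
    ker (sqSub σ) = range (Algebra.linearMap K L) := by
  ext z
  simp only [mem_ker, sqSub_apply, sub_eq_zero, EmbeddingLike.apply_eq_iff_eq]
  refine ⟨fun h => mem_range_algebraMap_of_apply_eq_self hgen h, ?_⟩
  rintro ⟨c, rfl⟩
  exact σ.commutes c

lemma finrank_range_sqSub_add_one [FiniteDimensional K L] [IsGalois K L]
    (hgen : ∀ τ : L ≃ₐ[K] L, τ ∈ Subgroup.zpowers σ) :
    finrank K (range (sqSub σ)) + 1 = finrank K L := by
  rw [← (sqSub σ).finrank_range_add_finrank_ker, ker_sqSub hgen,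
    finrank_range_of_inj (f := Algebra.linearMap K L) (algebraMap K L).injective, finrank_self]

lemma not_injective_smul_sqSub (a : K) : ¬ Function.Injective (a • sqSub σ) := fun h =>
  one_ne_zero (h (by simp : (a • sqSub σ) 1 = (a • sqSub σ) 0))

variable (σ) in
noncomputable def sqSubMulLeft : K × ker (Algebra.trace K L) →ₗ[K] L →ₗ[K] L :=
  coprod (toSpanSingleton K _ (sqSub σ)) (LinearMap.mul K L ∘ₗ (ker (Algebra.trace K L)).subtype)

lemma sqSubMulLeft_apply (p : K × ker (Algebra.trace K L)) :
    sqSubMulLeft σ p = p.1 • sqSub σ + mulLeft K (p.2 : L) := rfl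

lemma injective_sqSubMulLeft (hσ : sqSub σ ≠ 0) : Function.Injective (sqSubMulLeft σ) := by
  rw [← ker_eq_bot, ker_eq_bot']
  rintro ⟨a, b⟩ h
  have hb : (b : L) = 0 := by simpa [sqSubMulLeft_apply] using DFunLike.congr_fun h 1
  have ha : a = 0 := by
    simpa [sqSubMulLeft_apply, hb, hσ] using h
  exact Prod.ext ha (Subtype.ext hb)

lemma mem_range_sqSubMulLeft_iff {T : L →ₗ[K] L} :
    T ∈ range (sqSubMulLeft σ) ↔
      ∃ a : K, ∃ b : L, Algebra.trace K L b = 0 ∧ T = a • sqSub σ + mulLeft K b := by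
  constructor
  · rintro ⟨⟨a, b, hb⟩, rfl⟩
    exact ⟨a, b, hb, rfl⟩
  · rintro ⟨a, b, hb, rfl⟩
    exact ⟨⟨a, b, hb⟩, rfl⟩

lemma trace_eq_zero_iff_add_add_eq_zero [FiniteDimensional K L] [IsGalois K L]
    (hgen : ∀ τ : L ≃ₐ[K] L, τ ∈ Subgroup.zpowers σ) (h3 : orderOf σ = 3) (b : L) :
    Algebra.trace K L b = 0 ↔ b + σ b + σ (σ b) = 0 := by
  rw [← (FaithfulSMul.algebraMap_injective K L).eq_iff, map_zero,
    algebraMap_trace_eq_sum_range_orderOf hgen, h3]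
  simp [Finset.sum_range_succ]

lemma injective_smul_sqSub_add_mulLeft (hσ : σ ^ 3 = 1) {b : L} (hb : b ≠ 0)
    (hsum : b + σ b + σ (σ b) = 0) (a : K) :
    Function.Injective (a • sqSub σ + mulLeft K b) := by
  have hσ₃ : ∀ z, σ (σ (σ z)) = z := fun z => by
    simpa [pow_succ] using DFunLike.congr_fun hσ z
  have hσb : σ b ≠ 0 := (map_ne_zero σ).mpr hb
  rw [← ker_eq_bot, ker_eq_bot']
  intro z hz
  set α := algebraMap K L a
  have h₁ : α * (σ (σ z) - σ z) + b * z = 0 := by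
    simpa [α, ← Algebra.smul_def] using hz
  have h₂ : α * (z - σ (σ z)) + σ b * σ z = 0 := by
    simpa [α, hσ₃] using congrArg σ h₁
  have h₃ : α * (σ z - z) + σ (σ b) * σ (σ z) = 0 := by
    simpa [α, hσ₃] using congrArg σ h₂
  exact eq_zero_of_cyclic_system hb hσb ((map_ne_zero σ).mpr hσb) hsum h₁ h₂ h₃

end CyclicGalois

theorem stmt9 {K L : Type*} [Field K] [Field L] [Algebra K L] [IsGalois K L]
    (hdim : Module.finrank K L = 3) (σ : L ≃ₐ[K] L)
    (hgen : ∀ τ : L ≃ₐ[K] L, τ ∈ Subgroup.zpowers σ) :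
    ∃ N : Submodule K (L →ₗ[K] L),
      (↑N = {T : L →ₗ[K] L | ∃ a : K, ∃ b : L, b + σ b + σ (σ b) = 0 ∧
        T = a • (σ.toLinearMap ∘ₗ σ.toLinearMap - σ.toLinearMap) +
          LinearMap.mulLeft K b}) ∧
      Module.finrank K N = 3 ∧
      (∀ T ∈ N, ¬ Function.Bijective T ↔
        ∃ a : K, T = a • (σ.toLinearMap ∘ₗ σ.toLinearMap - σ.toLinearMap)) ∧
      (∀ a : K, a ≠ 0 →
        Module.finrank K
          (LinearMap.range (a • (σ.toLinearMap ∘ₗ σ.toLinearMap - σ.toLinearMap))) = 2) := by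
  have : FiniteDimensional K L := .of_finrank_pos (by omega)
  have h3 : orderOf σ = 3 := hdim ▸ orderOf_eq_finrank_of_forall_mem_zpowers hgen
  have hrange : finrank K (range (sqSub σ)) = 2 := by
    have := finrank_range_sqSub_add_one hgen; omega
  have hσ : sqSub σ ≠ 0 := fun h => by rw [h, range_zero, finrank_bot] at hrange; omega
  rw [← sqSub_def]
  refine ⟨range (sqSubMulLeft σ), ?_, ?_, ?_, fun a ha => by rw [range_smul _ _ ha, hrange]⟩
  · ext T
    rw [SetLike.mem_coe, mem_range_sqSubMulLeft_iff]
    simp only [Set.mem_ofPred_eq, trace_eq_zero_iff_add_add_eq_zero hgen h3]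
  · rw [finrank_range_of_inj (injective_sqSubMulLeft hσ), finrank_prod, finrank_self]
    have := finrank_ker_trace_add_one (K := K) (L := L); omega
  · intro T hT
    obtain ⟨a, b, hb, rfl⟩ := mem_range_sqSubMulLeft_iff.mp hT
    rw [trace_eq_zero_iff_add_add_eq_zero hgen h3] at hb
    constructor
    · intro hbij
      by_cases hb₀ : b = 0
      · exact ⟨a, by simp [hb₀]⟩
      have hinj := injective_smul_sqSub_add_mulLeft (h3 ▸ pow_orderOf_eq_one σ) hb₀ hb a
      exact absurd ⟨hinj, injective_iff_surjective.mp hinj⟩ hbij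
    · rintro ⟨a', h⟩
      exact h ▸ fun hbij => not_injective_smul_sqSub a' hbij.injective
end

section
/- Let q be a power of an odd prime and f ∈ F_q[x_1,...,x_d]. Suppose y² − f is reducible over the algebraic closure of F_q (as a polynomial in x_1,...,x_d,y). Then f = g² for some g ∈ E[x_1,...,x_d], where E = F_q or E = F_{q²}; in the latter case g^σ = −g, where σ is the q-th power Frobenius applied to the coefficients of g. -/
/-!
Over `L = AlgebraicClosure F`, Gauss's lemma for the integrally closed ring `L[x₁, …, x_d]` turns
reducibility of `y² - f` into `f = g²` with `g` over `L`. The `q`-power Frobenius `σ` fixes `f`, so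
`(g^σ)² = g²` and `g^σ = ±g`. If `g^σ = g`, every coefficient of `g` is a root of `X^q - X`, hence
lies in `F`. If `g^σ = -g`, every coefficient satisfies `c^(q²) = c`, hence lies in the copy of the
field `E` of order `q²` inside `L`.
-/

open MvPolynomial

theorem exists_pow_eq_of_not_irreducible_X_pow_sub_C {R : Type*} [CommRing R] [IsDomain R]
    [IsIntegrallyClosed R] {p : ℕ} (hp : p.Prime) {a : R}
    (h : ¬ Irreducible (Polynomial.X ^ p - Polynomial.C a)) : ∃ b : R, b ^ p = a := by
  have hmonic : (Polynomial.X ^ p - Polynomial.C a).Monic :=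
    Polynomial.monic_X_pow_sub_C a hp.ne_zero
  obtain ⟨b, hb⟩ : ∃ b : FractionRing R, b ^ p = algebraMap R (FractionRing R) a := by
    by_contra! hK
    refine h ((hmonic.irreducible_iff_irreducible_map_fraction_map (K := FractionRing R)).mpr ?_)
    simpa using X_pow_sub_C_irreducible_of_prime hp hK
  have hint : IsIntegral R b := ⟨_, hmonic, by simp [Polynomial.eval₂_sub, hb]⟩
  obtain ⟨c, rfl⟩ := IsIntegrallyClosed.isIntegral_iff.mp hint
  exact ⟨c, IsFractionRing.injective R (FractionRing R) (by rw [map_pow, hb])⟩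

theorem FiniteField.mem_range_of_pow_card_eq_self {K L : Type*} [Field K] [Fintype K] [Field L]
    (i : K →+* L) {x : L} (hx : x ^ Fintype.card K = x) : x ∈ Set.range i := by
  -- `X ^ q - X` already has its `q` roots in `K`, so it has no others in `L`.
  have hroots : ((Polynomial.X ^ Fintype.card K - Polynomial.X : Polynomial K).map i).roots =
      Finset.univ.val.map i := by
    rw [← Polynomial.roots_map_of_injective_of_card_eq_natDegree i.injective,
      FiniteField.roots_X_pow_card_sub_X]
    rw [FiniteField.roots_X_pow_card_sub_X,
      FiniteField.X_pow_card_sub_X_natDegree_eq K Fintype.one_lt_card, Finset.card_val,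
      Finset.card_univ]
  have hne : (Polynomial.X ^ Fintype.card K - Polynomial.X : Polynomial K).map i ≠ 0 :=
    (Polynomial.map_ne_zero_iff i.injective).mpr
      (FiniteField.X_pow_card_sub_X_ne_zero K Fintype.one_lt_card)
  have hxroot : x ∈ ((Polynomial.X ^ Fintype.card K - Polynomial.X : Polynomial K).map i).roots := by
    rw [Polynomial.mem_roots hne]
    simp [hx]
  rw [hroots, Multiset.mem_map] at hxroot
  obtain ⟨y, -, hy⟩ := hxroot
  exact ⟨y, hy⟩

theorem MvPolynomial.exists_map_eq_of_coeff_pow_card_eq {σ K L : Type*} [Field K] [Fintype K]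
    [Field L] (i : K →+* L) {g : MvPolynomial σ L}
    (hg : ∀ m, g.coeff m ^ Fintype.card K = g.coeff m) : ∃ g₀, map i g₀ = g := by
  rw [← Set.mem_range, mem_range_map_iff_coeffs_subset]
  rintro _ hc
  obtain ⟨m, -, rfl⟩ := mem_coeffs_iff.mp hc
  exact FiniteField.mem_range_of_pow_card_eq_self i (hg m)

theorem MvPolynomial.map_frobeniusAlgHom_eq_or_eq_neg_of_sq_eq_map {σ K L : Type*} [Field K]
    [Fintype K] [CommRing L] [IsDomain L] [Algebra K L] {f : MvPolynomial σ K}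
    {g : MvPolynomial σ L} (hg : g ^ 2 = map (algebraMap K L) f) :
    map (↑(FiniteField.frobeniusAlgHom K L) : L →+* L) g = g ∨
      map (↑(FiniteField.frobeniusAlgHom K L) : L →+* L) g = -g := by
  refine eq_or_eq_neg_of_sq_eq_sq _ _ ?_
  rw [← map_pow, hg, map_map]
  exact congrArg (map · f) (AlgHom.comp_algebraMap _)

theorem stmt14_general {F : Type*} [Field F] [Fintype F]
    {d : ℕ} (f : MvPolynomial (Fin d) F)
    (hred : ¬ Irreducible (Polynomial.X ^ 2 - Polynomial.C
      (MvPolynomial.map (algebraMap F (AlgebraicClosure F)) f)))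
    (E : Type*) [Field E] [Algebra F E] (hE : Module.finrank F E = 2) :
    (∃ g : MvPolynomial (Fin d) F, f = g ^ 2) ∨
    (∃ g : MvPolynomial (Fin d) E,
      MvPolynomial.map (algebraMap F E) f = g ^ 2 ∧
      ∀ m, MvPolynomial.coeff m g ^ Fintype.card F = - MvPolynomial.coeff m g) := by
  set L := AlgebraicClosure F
  set σ : L →+* L := ↑(FiniteField.frobeniusAlgHom F L)
  obtain ⟨g, hg⟩ := exists_pow_eq_of_not_irreducible_X_pow_sub_C Nat.prime_two hred
  rcases map_frobeniusAlgHom_eq_or_eq_neg_of_sq_eq_map hg with hσg | hσg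
  · left
    obtain ⟨g₀, rfl⟩ := exists_map_eq_of_coeff_pow_card_eq (algebraMap F L) (g := g)
      fun m ↦ show σ _ = _ by rw [← coeff_map, hσg]
    exact ⟨g₀, map_injective _ (algebraMap F L).injective (by rw [map_pow, hg])⟩
  · right
    have hσ (m : Fin d →₀ ℕ) : σ (g.coeff m) = -g.coeff m := by
      rw [← coeff_map, hσg, coeff_neg]
    have : Module.Finite F E := Module.finite_of_finrank_eq_succ hE
    have : Finite E := Module.finite_of_finite F
    have : Fintype E := Fintype.ofFinite E
    have hσσ (m : Fin d →₀ ℕ) : g.coeff m ^ Fintype.card E = g.coeff m := by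
      rw [Module.card_eq_pow_finrank (K := F), hE, sq, pow_mul]
      change σ (σ (g.coeff m)) = _
      rw [hσ, map_neg, hσ, neg_neg]
    let j : E →+* L := (IsAlgClosed.lift : E →ₐ[F] L)
    obtain ⟨g₁, rfl⟩ := exists_map_eq_of_coeff_pow_card_eq j hσσ
    refine ⟨g₁, map_injective j j.injective ?_, fun m ↦ j.injective ?_⟩
    · rw [map_map, show j.comp (algebraMap F E) = algebraMap F L from AlgHom.comp_algebraMap _,
        ← hg, map_pow]
    · rw [map_pow, map_neg, ← coeff_map]
      exact hσ m

theorem stmt14 {F : Type*} [Field F] [Fintype F] (hodd : Odd (Fintype.card F))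
    {d : ℕ} (f : MvPolynomial (Fin d) F)
    (hred : ¬ Irreducible (Polynomial.X ^ 2 - Polynomial.C
      (MvPolynomial.map (algebraMap F (AlgebraicClosure F)) f)))
    (E : Type*) [Field E] [Algebra F E] (hE : Module.finrank F E = 2) :
    (∃ g : MvPolynomial (Fin d) F, f = g ^ 2) ∨
    (∃ g : MvPolynomial (Fin d) E,
      MvPolynomial.map (algebraMap F E) f = g ^ 2 ∧
      ∀ m, MvPolynomial.coeff m g ^ Fintype.card F = - MvPolynomial.coeff m g) :=
  stmt14_general f hred E hE
end

section
/- Let q be an odd prime power. Consider F(x,y) = x^{2p} − x²y^{2p−2} + y^{2p} ∈ F_p[x,y] for an odd prime p. Then F(λ, μ) is a square in F_p for all (λ, μ) ∈ F_p², and if p ≡ 3 (mod 4), F is irreducible over F_p (in particular, not the square of a polynomial). -/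
/-!
Fermat's little theorem gives `F(λ, μ) = μ²` for `μ ≠ 0`, and `F(λ, 0) = (λ^p)²`.

For irreducibility, `F` is monic in `x` over `F_p[y]` and specializes at `y = 1` to
`f = x^{2p} - x² + 1`, so it suffices that `f` is irreducible. Let `β` be a root of a monic
irreducible factor `g` of `f`, in the field `F_p(β)` of degree `m = deg g`. Then `α = β²` satisfies
the Artin–Schreier equation `α^p = α - 1`, so Frobenius acts by `α ↦ α - 1`; as `Frob^m` fixes
`α`, `p ∣ m`. The product of the conjugates `α - a`, `a ∈ F_p`, is `α^p - α = -1`, and it is a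
power of the square `α`, so `-1` is a square in `F_{p^m}`: then `p^m ≢ 3 (mod 4)`, so `m` is even.
Hence `2p ∣ m ≤ 2p`, and `g = f`.
-/

open MvPolynomial

/-- The homogenization `x^{2p} - x^2 y^{2p-2} + y^{2p}` of `x^{2p} - x^2 + 1`. -/
noncomputable def Fpoly (p : ℕ) : MvPolynomial (Fin 2) (ZMod p) :=
  X 0 ^ (2 * p) - X 0 ^ 2 * X 1 ^ (2 * p - 2) + X 1 ^ (2 * p)

theorem FiniteField.prod_X_sub_C_eq_X_pow_card_sub_X (K : Type*) [Field K] [Fintype K] :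
    ∏ a : K, (Polynomial.X - Polynomial.C a) = Polynomial.X ^ Fintype.card K - Polynomial.X := by
  have hq : 1 < Fintype.card K := Fintype.one_lt_card
  have hmonic : (Polynomial.X ^ Fintype.card K - Polynomial.X : Polynomial K).Monic :=
    Polynomial.monic_X_pow_sub (by rw [Polynomial.degree_X]; exact_mod_cast hq)
  conv_rhs => rw [← Polynomial.prod_multiset_X_sub_C_of_monic_of_roots_card_eq hmonic (by
    rw [roots_X_pow_card_sub_X, X_pow_card_sub_X_natDegree_eq K hq]; rfl)]
  rw [roots_X_pow_card_sub_X]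
  rfl

section ArtinSchreier

variable {p : ℕ} [Fact p.Prime] {L : Type*} [Field L] [Algebra (ZMod p) L] {α : L}

theorem pow_char_pow_eq_sub_natCast (hα : α ^ p = α - 1) (k : ℕ) : α ^ p ^ k = α - k := by
  have := charP_of_injective_algebraMap' (ZMod p) (A := L) p
  induction k with
  | zero => simp
  | succ k ih =>
    have hk : (k : L) ^ p = k := by
      have := map_natCast (frobenius L p) k
      rwa [frobenius_def] at this
    rw [pow_succ, pow_mul, ih, sub_pow_char, hα, hk]
    push_cast
    ring

theorem pow_sum_pow_val_eq_neg_one (hα : α ^ p = α - 1) :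
    α ^ ∑ a : ZMod p, p ^ a.val = -1 := by
  have hprod : ∏ a : ZMod p, (α - algebraMap (ZMod p) L a) = α ^ p - α := by
    simpa [ZMod.card] using congrArg (Polynomial.aeval α)
      (FiniteField.prod_X_sub_C_eq_X_pow_card_sub_X (ZMod p))
  calc α ^ ∑ a : ZMod p, p ^ a.val = ∏ a : ZMod p, (α - algebraMap (ZMod p) L a) := by
        rw [← Finset.prod_pow_eq_pow_sum]
        refine Finset.prod_congr rfl fun a _ => ?_
        rw [pow_char_pow_eq_sub_natCast hα, ← map_natCast (algebraMap (ZMod p) L),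
          ZMod.natCast_zmod_val]
    _ = -1 := by rw [hprod, hα]; ring

theorem dvd_finrank_of_pow_char_eq_sub_one [Fintype L] (hα : α ^ p = α - 1) :
    p ∣ Module.finrank (ZMod p) L := by
  have := charP_of_injective_algebraMap' (ZMod p) (A := L) p
  have hfix : α ^ p ^ Module.finrank (ZMod p) L = α := by
    have := FiniteField.pow_card α
    rwa [Module.card_eq_pow_finrank (K := ZMod p), ZMod.card] at this
  rw [pow_char_pow_eq_sub_natCast hα, sub_eq_self] at hfix
  exact (CharP.cast_eq_zero_iff L p _).mp hfix

theorem even_finrank_of_isSquare_neg_one [Fintype L] (hp4 : p % 4 = 3)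
    (h : IsSquare (-1 : L)) : Even (Module.finrank (ZMod p) L) := by
  rw [FiniteField.isSquare_neg_one_iff, Module.card_eq_pow_finrank (K := ZMod p), ZMod.card] at h
  by_contra hodd
  obtain ⟨j, hj⟩ := Nat.not_even_iff_odd.mp hodd
  apply h
  rw [hj, Nat.pow_mod, hp4, pow_succ, pow_mul, Nat.mul_mod, Nat.pow_mod]
  norm_num

theorem two_mul_dvd_finrank_of_sq_pow_char_eq_sub_one [Fintype L] (hp4 : p % 4 = 3) {β : L}
    (hβ : (β ^ 2) ^ p = β ^ 2 - 1) : 2 * p ∣ Module.finrank (ZMod p) L := by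
  have hsq : IsSquare (-1 : L) := ⟨β ^ ∑ a : ZMod p, p ^ a.val, by
    rw [← pow_add, ← two_mul, pow_mul, pow_sum_pow_val_eq_neg_one hβ]⟩
  exact Nat.Coprime.mul_dvd_of_dvd_of_dvd (Nat.coprime_two_left.mpr (Nat.odd_iff.mpr (by omega)))
    (even_finrank_of_isSquare_neg_one hp4 hsq).two_dvd (dvd_finrank_of_pow_char_eq_sub_one hβ)

end ArtinSchreier

theorem irreducible_X_pow_two_mul_sub_X_sq_add_one (p : ℕ) [Fact p.Prime] (hp4 : p % 4 = 3) :
    Irreducible (Polynomial.X ^ (2 * p) - Polynomial.X ^ 2 + 1 : Polynomial (ZMod p)) := by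
  set f : Polynomial (ZMod p) := Polynomial.X ^ (2 * p) - Polynomial.X ^ 2 + 1 with hf
  have hp2 := (Fact.out : p.Prime).two_le
  have hf_deg : f.natDegree = 2 * p := by
    rw [hf]; compute_degree!
    · simp [show p ≠ 0 by omega, show p ≠ 1 by omega]
    all_goals omega
  have hf_monic : f.Monic := by
    rw [hf]; monicity!
    simp [show ¬p ≤ 1 by omega, show p ≠ 0 by omega]
  obtain ⟨g, hg_monic, hg_irr, hgf⟩ :=
    Polynomial.exists_monic_irreducible_factor f (Polynomial.not_isUnit_of_natDegree_pos _ (by omega))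
  have := Fact.mk hg_irr
  let pb := AdjoinRoot.powerBasis hg_irr.ne_zero
  have : Module.Finite (ZMod p) (AdjoinRoot g) := pb.finite
  have := Module.finite_of_finite (ZMod p) (M := AdjoinRoot g)
  have := Fintype.ofFinite (AdjoinRoot g)
  set β := AdjoinRoot.root g
  have hβ : (β ^ 2) ^ p = β ^ 2 - 1 := by
    have hfβ : Polynomial.aeval β f = 0 := by
      rw [AdjoinRoot.aeval_eq, AdjoinRoot.mk_eq_zero]; exact hgf
    rw [← pow_mul]
    linear_combination (by simpa [hf] using hfβ : β ^ (2 * p) - β ^ 2 + 1 = 0)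
  have hg_deg : g.natDegree = 2 * p := by
    have hdvd := pb.finrank ▸ two_mul_dvd_finrank_of_sq_pow_char_eq_sub_one hp4 hβ
    exact le_antisymm (hf_deg ▸ Polynomial.natDegree_le_of_dvd hgf hf_monic.ne_zero)
      (Nat.le_of_dvd hg_irr.natDegree_pos hdvd)
  rwa [Polynomial.eq_of_monic_of_dvd_of_natDegree_le hg_monic hf_monic hgf
    (hf_deg.trans hg_deg.symm).le]

theorem irreducible_Fpoly (p : ℕ) [Fact p.Prime] (hp4 : p % 4 = 3) : Irreducible (Fpoly p) := by
  have hp2 := (Fact.out : p.Prime).two_le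
  rw [← MulEquiv.irreducible_iff (finSuccEquiv (ZMod p) 1)]
  have hX1 : finSuccEquiv (ZMod p) 1 (X 1) = Polynomial.C (X 0) := finSuccEquiv_X_succ (j := 0)
  have hG : finSuccEquiv (ZMod p) 1 (Fpoly p) = Polynomial.X ^ (2 * p)
      - Polynomial.X ^ 2 * Polynomial.C (X 0) ^ (2 * p - 2) + Polynomial.C (X 0) ^ (2 * p) := by
    simp only [Fpoly, map_add, map_sub, map_mul, map_pow, hX1, finSuccEquiv_X_zero]
  refine Polynomial.Monic.irreducible_of_irreducible_map (MvPolynomial.eval fun _ => 1) _ ?_ ?_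
  · rw [hG]; monicity!
    simp [show 1 ≤ p by omega, show ¬p ≤ 1 by omega]
  · convert irreducible_X_pow_two_mul_sub_X_sq_add_one p hp4
    simp only [hG, Polynomial.map_add, Polynomial.map_sub, Polynomial.map_mul, Polynomial.map_pow,
      Polynomial.map_X, Polynomial.map_C, eval_X, map_one, one_pow, mul_one]

theorem exists_eval_Fpoly_eq_sq (p : ℕ) [Fact p.Prime] (a b : ZMod p) :
    ∃ s : ZMod p, eval ![a, b] (Fpoly p) = s ^ 2 := by
  have hp2 := (Fact.out : p.Prime).two_le
  have hev : eval ![a, b] (Fpoly p) = a ^ (2 * p) - a ^ 2 * b ^ (2 * p - 2) + b ^ (2 * p) := by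
    simp [Fpoly]
  rcases eq_or_ne b 0 with rfl | hb
  · exact ⟨a ^ p, by rw [hev, zero_pow (by omega), zero_pow (by omega)]; ring⟩
  · have hfermat (c : ZMod p) : c ^ (2 * p) = c ^ 2 := by rw [mul_comm, pow_mul, ZMod.pow_card]
    have hb1 : b ^ (2 * p - 2) = 1 := by
      rw [show 2 * p - 2 = (p - 1) * 2 by omega, pow_mul, ZMod.pow_card_sub_one_eq_one hb, one_pow]
    exact ⟨b, by rw [hev, hfermat, hfermat, hb1]; ring⟩

theorem stmt15_general (p : ℕ) [Fact p.Prime] :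
    (∀ a b : ZMod p, ∃ s : ZMod p, eval ![a, b] (Fpoly p) = s ^ 2) ∧
    (p % 4 = 3 → Irreducible (Fpoly p)) :=
  ⟨exists_eval_Fpoly_eq_sq p, irreducible_Fpoly p⟩

theorem stmt15 (p : ℕ) [Fact p.Prime] (hp : Odd p) :
    (∀ a b : ZMod p, ∃ s : ZMod p, eval ![a, b] (Fpoly p) = s ^ 2) ∧
    (p % 4 = 3 → Irreducible (Fpoly p)) :=
  stmt15_general p
end

section
/- Let M be a d-dimensional subspace of the space of m×n matrices over F_q containing an element of rank r. Then the number of elements of M of rank at least r is at least q^d − r·q^{d−1} + r − 1. -/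
/-!
Let `A ∈ M` have rank `r`. Over a field there are `P` (`r × m`) and `Q` (`n × r`) with
`P * A * Q = 1`, and `det (P * X * Q) ≠ 0` forces `rank X ≥ r`. Split `M = W ⊕ F ∙ A`.
Along each line `X + c • A` the determinant `det (P * X * Q + c • 1)` is the characteristic
polynomial of `-(P * X * Q)` evaluated at `c`, monic of degree `r`, so it vanishes for at most
`r` values of `c`; on the line through `0` it is `c ^ r`, which vanishes only at `c = 0`.
Summing over the `q ^ (d - 1)` lines gives at least `q ^ (d - 1) * (q - r) + r - 1` matrices
with `det (P * X * Q) ≠ 0`.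
-/

open Polynomial Module

namespace Matrix

theorem natCard_det_add_smul_one_eq_zero_le {R ι : Type*} [CommRing R] [IsDomain R] [Fintype ι]
    [DecidableEq ι] (B : Matrix ι ι R) :
    Nat.card {t : R // (B + t • (1 : Matrix ι ι R)).det = 0} ≤ Fintype.card ι := by
  classical
  have hroot (t : R) (ht : (B + t • 1).det = 0) : t ∈ (-B).charpoly.roots.toFinset := by
    rwa [Multiset.mem_toFinset, mem_roots (charpoly_monic _).ne_zero, IsRoot, eval_charpoly,
      scalar_apply, ← smul_one_eq_diagonal, sub_neg_eq_add, add_comm]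
  calc Nat.card {t : R // (B + t • 1).det = 0}
      ≤ Nat.card (-B).charpoly.roots.toFinset :=
        Nat.card_mono (Finset.finite_toSet _) fun t ht ↦ hroot t ht
    _ ≤ (-B).charpoly.natDegree := by
        rw [Nat.card_eq_finsetCard]
        exact card_le_degree_of_subset_roots (Multiset.dedup_subset _)
    _ = Fintype.card ι := charpoly_natDegree_eq_dim _

theorem exists_mul_mul_eq_one {K m n : Type*} [Field K] [Fintype m] [Fintype n]
    (A : Matrix m n K) : ∃ (P : Matrix (Fin A.rank) m K) (Q : Matrix n (Fin A.rank) K),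
      P * A * Q = 1 := by
  classical
  let T := toLin' A
  let e : (Fin A.rank → K) ≃ₗ[K] LinearMap.range T :=
    (finBasisOfFinrankEq K _ rfl).equivFun.symm
  obtain ⟨v, hv⟩ :=
    ((LinearMap.range T).subtype ∘ₗ e.toLinearMap).exists_leftInverse_of_injective
      (LinearMap.ker_eq_bot.2 (Subtype.val_injective.comp e.injective))
  obtain ⟨u, hu⟩ := T.rangeRestrict.exists_rightInverse_of_surjective T.range_rangeRestrict
  have hid : v ∘ₗ T ∘ₗ u ∘ₗ e.toLinearMap = LinearMap.id := by
    change v ∘ₗ (LinearMap.range T).subtype ∘ₗ (T.rangeRestrict ∘ₗ u) ∘ₗ e.toLinearMap =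
      LinearMap.id
    rw [hu, LinearMap.id_comp]
    exact hv
  refine ⟨LinearMap.toMatrix' v, LinearMap.toMatrix' (u ∘ₗ e.toLinearMap), ?_⟩
  rw [Matrix.mul_assoc]
  simpa [LinearMap.toMatrix'_comp, T, LinearMap.toMatrix'_toLin'] using
    congrArg LinearMap.toMatrix' hid

theorem card_le_rank_of_det_mul_mul_ne_zero {R ι m n : Type*} [CommRing R] [IsDomain R]
    [Fintype ι] [DecidableEq ι] [Fintype m] [Fintype n] {P : Matrix ι m R} {X : Matrix m n R}
    {Q : Matrix n ι R} (h : (P * X * Q).det ≠ 0) : Fintype.card ι ≤ X.rank := calc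
  Fintype.card ι = (P * X * Q).rank := (rank_of_det_ne_zero h).symm
  _ ≤ (P * X).rank := rank_mul_le_left _ _
  _ ≤ X.rank := rank_mul_le_right _ _

end Matrix

section LineCount

variable {K V : Type*} [Field K] [AddCommGroup V] [Module K V]

theorem natCard_subtype_eq_sum_natCard_line [Finite K] {a : V} (ha : a ≠ 0) {W : Submodule K V}
    [Fintype W] (hW : IsCompl W (K ∙ a)) (p : V → Prop) :
    Nat.card {x // p x} = ∑ w : W, Nat.card {c : K // p (w + c • a)} := by
  let E : W × K ≃ V := ((LinearEquiv.refl K W).prodCongr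
    (LinearEquiv.toSpanNonzeroSingleton K V a ha)).trans (Submodule.prodEquivOfIsCompl _ _ hW)
  have hE (wc : W × K) : E wc = wc.1 + wc.2 • a := by simp [E]
  rw [← Nat.card_sigma]
  exact Nat.card_congr <| (E.subtypeEquiv fun wc ↦ by rw [hE]).symm.trans
    (Equiv.subtypeProdEquivSigmaSubtype fun (w : W) (c : K) ↦ p (w + c • a))

theorem sub_le_natCard_subtype {α : Type*} [Finite α] {p : α → Prop} {k : ℕ}
    (h : Nat.card {x // ¬ p x} ≤ k) : (Nat.card α : ℤ) - k ≤ Nat.card {x // p x} := by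
  classical
  have := Nat.card_congr (Equiv.sumCompl p)
  rw [Nat.card_sum] at this
  omega

theorem le_natCard_subtype_of_line [Fintype K] [Module.Finite K V] {a : V} (ha : a ≠ 0)
    (p : V → Prop) {r : ℕ} (hline : ∀ x, Nat.card {c : K // ¬ p (x + c • a)} ≤ r)
    (hzero : ∀ c : K, c ≠ 0 → p (c • a)) :
    (Fintype.card K : ℤ) ^ finrank K V - r * (Fintype.card K : ℤ) ^ (finrank K V - 1) + r - 1
      ≤ Nat.card {x // p x} := by
  classical
  rw [← Nat.card_eq_fintype_card]
  have := Module.finite_of_finite K (M := V)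
  obtain ⟨W, hW⟩ := (K ∙ a).exists_isCompl
  have := Fintype.ofFinite W
  have hfinrank : finrank K V = finrank K W + 1 := by
    rw [← Submodule.finrank_add_eq_of_isCompl hW, finrank_span_singleton ha, add_comm]
  have hfiber_zero : (Nat.card K : ℤ) - 1 ≤ Nat.card {c : K // p ((0 : W) + c • a)} := by
    have hbad (c : {c : K // ¬ p ((0 : W) + c • a)}) : c.1 = 0 :=
      by_contra fun hc ↦ c.2 (by simpa using hzero _ hc)
    exact sub_le_natCard_subtype <| Finite.card_le_one_iff_subsingleton.2
      ⟨fun c d ↦ Subtype.ext ((hbad c).trans (hbad d).symm)⟩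
  have hsum : ∑ w : W, ((Nat.card K : ℤ) - r + if w = 0 then (r : ℤ) - 1 else 0) ≤
      ∑ w : W, (Nat.card {c : K // p (w + c • a)} : ℤ) := by
    refine Finset.sum_le_sum fun w _ ↦ ?_
    split_ifs with hw
    · subst hw; linarith
    · simpa using sub_le_natCard_subtype (hline w)
  rw [natCard_subtype_eq_sum_natCard_line ha hW.symm p, Nat.cast_sum]
  refine le_trans (le_of_eq ?_) hsum
  rw [Finset.sum_add_distrib, Finset.sum_ite_eq' Finset.univ (0 : W), Finset.sum_const,
    Finset.card_univ, ← Nat.card_eq_fintype_card, natCard_eq_pow_finrank (K := K) (V := W),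
    hfinrank]
  simp only [Finset.mem_univ, if_true, Nat.add_sub_cancel, nsmul_eq_mul]
  push_cast; ring

end LineCount

theorem stmt17 {F : Type*} [Field F] [Fintype F] {m n d r : ℕ}
    (M : Submodule F (Matrix (Fin m) (Fin n) F)) (hdim : Module.finrank F M = d)
    (hex : ∃ A ∈ M, Matrix.rank A = r) :
    (Fintype.card F : ℤ) ^ d - r * (Fintype.card F : ℤ) ^ (d - 1) + r - 1 ≤
      (Nat.card {A : M // r ≤ Matrix.rank (A : Matrix (Fin m) (Fin n) F)} : ℤ) := by
  obtain ⟨A, hAM, rfl⟩ := hex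
  subst hdim
  rcases A.rank.eq_zero_or_pos with hr | hr
  · simp [hr, Module.natCard_eq_pow_finrank (K := F) (V := M), Nat.card_eq_fintype_card]
  obtain ⟨P, Q, hPAQ⟩ := A.exists_mul_mul_eq_one
  have ha : (⟨A, hAM⟩ : M) ≠ 0 := by
    rw [Ne, Submodule.mk_eq_zero]
    rintro rfl
    simp at hr
  have hline (X : Matrix (Fin m) (Fin n) F) (c : F) :
      P * (X + c • A) * Q = P * X * Q + c • 1 := by
    rw [Matrix.mul_add, Matrix.add_mul, Matrix.mul_smul, Matrix.smul_mul, hPAQ]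
  calc _ ≤ (Nat.card {X : M // (P * (X : Matrix (Fin m) (Fin n) F) * Q).det ≠ 0} : ℤ) := by
        refine le_natCard_subtype_of_line ha _ (fun X ↦ ?_) fun c hc ↦ ?_
        · simpa [hline, Fintype.card_fin] using
            Matrix.natCard_det_add_smul_one_eq_zero_le (P * (X : Matrix (Fin m) (Fin n) F) * Q)
        · simp [Matrix.mul_smul, Matrix.smul_mul, hPAQ, hc]
    _ ≤ _ := by
        exact_mod_cast Nat.card_le_card_of_injective
          (Subtype.impEmbedding _ _ fun X hX ↦ by
            simpa using Matrix.card_le_rank_of_det_mul_mul_ne_zero hX)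
          (Subtype.impEmbedding _ _ _).injective
end
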